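/- If X is a finite-dimensional Banach space and Y is a Banach space with X ≡ Y, then Y is isometrically isomorphic to X; that is, the elementary-equivalence class of a finite-dimensional Banach space contains exactly one member up to isometry. -/

import Mathlib

open Filter Topology
open scoped ENNReal

noncomputable section

universe u

/-- The subspace `N_D ⊆ ℓ∞(I, X)` of families whose norms tend to `0` along the
ultrafilter `D`. -/
def ultraNullIdeal (I : Type u) (D : Ultrafilter I) (X : Type u)
    [NormedAddCommGroup X] [NormedSpace ℝ X] :
    Submodule ℝ (lp (fun _ : I => X) ∞) where
  carrier := {f | Filter.Tendsto (fun i => ‖f i‖) (D : Filter I) (nhds 0)}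
  zero_mem' := by
    simpa using (tendsto_const_nhds :
      Filter.Tendsto (fun _ : I => (0 : ℝ)) (D : Filter I) (nhds 0))
  add_mem' := by
    intro f g hf hg
    have h := hf.add hg
    rw [add_zero] at h
    refine squeeze_zero (fun i => norm_nonneg _) (fun i => ?_) h
    simpa using norm_add_le (f i) (g i)
  smul_mem' := by
    intro c f hf
    have h : Filter.Tendsto (fun i => ‖c‖ * ‖f i‖) (D : Filter I) (nhds 0) := by
      simpa using hf.const_mul ‖c‖
    refine squeeze_zero (fun i => norm_nonneg _) (fun i => ?_) h
    simp [norm_smul]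

/-- The Banach-space ultrapower `(X)_D = ℓ∞(I,X) / N_D`, with the quotient norm. -/
abbrev Ultrapower (I : Type u) (D : Ultrafilter I) (X : Type u)
    [NormedAddCommGroup X] [NormedSpace ℝ X] : Type u :=
  lp (fun _ : I => X) ∞ ⧸ ultraNullIdeal I D X

/-- The bounded family constantly equal to `x`, as an element of `ℓ∞(I, X)`. -/
def constLp (I : Type u) (X : Type u) [NormedAddCommGroup X] [NormedSpace ℝ X] (x : X) :
    lp (fun _ : I => X) ∞ :=
  ⟨fun _ => x, memℓp_infty ⟨‖x‖, by rintro r ⟨i, rfl⟩; exact le_rfl⟩⟩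

/-- The canonical (diagonal) embedding `d_X : X → (X)_D`. -/
def diagEmbedding (I : Type u) (D : Ultrafilter I) (X : Type u)
    [NormedAddCommGroup X] [NormedSpace ℝ X] (x : X) : Ultrapower I D X :=
  Submodule.Quotient.mk (constLp I X x)

/-- Banach spaces `X` and `Y` are *elementary equivalent* if some ultrapowers `(X)_G` and
`(Y)_G` are isometrically isomorphic. -/
def ElemEquiv (X Y : Type u) [NormedAddCommGroup X] [NormedSpace ℝ X]
    [NormedAddCommGroup Y] [NormedSpace ℝ Y] : Prop :=
  ∃ (K : Type u) (G : Ultrafilter K),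
    Nonempty (Ultrapower K G X ≃ₗᵢ[ℝ] Ultrapower K G Y)

/-!
A finite-dimensional space is its own ultrapower: a bounded family lies in a compact ball, so it
converges along the ultrafilter, and the diagonal embedding is onto. An isometric isomorphism
`(X)_D ≃ (Y)_D` therefore embeds `Y ↪ (Y)_D ≃ (X)_D ≃ X`, so `Y` is finite-dimensional as well, and
`X ≃ (X)_D ≃ (Y)_D ≃ Y`.
-/

section Ultrapower

variable {I : Type u} {D : Ultrafilter I} {X : Type u} [NormedAddCommGroup X] [NormedSpace ℝ X]

@[simp] lemma constLp_apply (x : X) (i : I) : constLp I X x i = x := rfl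

lemma norm_constLp_le (x : X) : ‖constLp I X x‖ ≤ ‖x‖ :=
  lp.norm_le_of_forall_le (norm_nonneg x) fun _ => le_rfl

lemma mem_ultraNullIdeal_iff {f : lp (fun _ : I => X) ∞} :
    f ∈ ultraNullIdeal I D X ↔ Tendsto (fun i => ‖f i‖) (D : Filter I) (𝓝 0) :=
  Iff.rfl

lemma le_norm_mk_of_eventually_le {f : lp (fun _ : I => X) ∞} {r : ℝ}
    (hr : ∀ᶠ i in (D : Filter I), r ≤ ‖f i‖) :
    r ≤ ‖(Submodule.Quotient.mk f : Ultrapower I D X)‖ := by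
  refine QuotientAddGroup.le_norm_iff.2 fun m hm => ?_
  have hnull : Tendsto (fun i => ‖(f - m) i‖) (D : Filter I) (𝓝 0) :=
    mem_ultraNullIdeal_iff.1 ((Submodule.Quotient.eq _).1 hm.symm)
  have hbound : ∀ᶠ i in (D : Filter I), r ≤ ‖m‖ + ‖(f - m) i‖ := hr.mono fun i hi => calc
    r ≤ ‖f i‖ := hi
    _ ≤ ‖m i‖ + ‖(f - m) i‖ := by simpa using norm_le_insert' (f i) (m i)
    _ ≤ ‖m‖ + ‖(f - m) i‖ := by gcongr; exact lp.norm_apply_le_norm ENNReal.top_ne_zero m i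
  simpa using ge_of_tendsto (tendsto_const_nhds.add hnull) hbound

lemma norm_diagEmbedding (x : X) : ‖diagEmbedding I D X x‖ = ‖x‖ :=
  le_antisymm ((Submodule.Quotient.norm_mk_le _ _).trans (norm_constLp_le x))
    (le_norm_mk_of_eventually_le (Eventually.of_forall fun _ => le_rfl))

lemma diagEmbedding_eq_mk_iff (x : X) (f : lp (fun _ : I => X) ∞) :
    diagEmbedding I D X x = Submodule.Quotient.mk f ↔
      Tendsto (fun i => f i) (D : Filter I) (𝓝 x) := by
  rw [diagEmbedding, Submodule.Quotient.eq, mem_ultraNullIdeal_iff,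
    tendsto_iff_norm_sub_tendsto_zero (f := fun i => f i)]
  simp only [lp.coeFn_sub, Pi.sub_apply, constLp_apply, norm_sub_rev x]

variable (I D X) in
def diagLinearIsometry : X →ₗᵢ[ℝ] Ultrapower I D X where
  toFun := diagEmbedding I D X
  map_add' _ _ := rfl
  map_smul' _ _ := rfl
  norm_map' := norm_diagEmbedding

lemma diagEmbedding_surjective [ProperSpace X] : Function.Surjective (diagEmbedding I D X) := by
  rintro ⟨f⟩
  have hball : ∀ᶠ i in (D : Filter I), f i ∈ Metric.closedBall (0 : X) ‖f‖ :=
    Eventually.of_forall fun i => by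
      simpa using lp.norm_apply_le_norm ENNReal.top_ne_zero f i
  obtain ⟨x, -, hx⟩ :=
    (isCompact_closedBall (0 : X) ‖f‖).ultrafilter_le_nhds (D.map f) (le_principal_iff.2 hball)
  exact ⟨x, (diagEmbedding_eq_mk_iff x f).2 hx⟩

variable (I D X) in
def diagEquiv [ProperSpace X] : X ≃ₗᵢ[ℝ] Ultrapower I D X :=
  LinearIsometryEquiv.ofSurjective (diagLinearIsometry I D X) diagEmbedding_surjective

end Ultrapower

theorem elemEquiv_finiteDimensional_isometric_general
    (X Y : Type u) [NormedAddCommGroup X] [NormedSpace ℝ X] [FiniteDimensional ℝ X]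
    [NormedAddCommGroup Y] [NormedSpace ℝ Y]
    (h : ElemEquiv X Y) :
    Nonempty (X ≃ₗᵢ[ℝ] Y) := by
  obtain ⟨K, G, ⟨e⟩⟩ := h
  let eX := diagEquiv K G X
  have : FiniteDimensional ℝ Y :=
    let j := eX.symm.toLinearIsometry.comp (e.symm.toLinearIsometry.comp (diagLinearIsometry K G Y))
    Module.Finite.of_injective j.toLinearMap j.injective
  exact ⟨(eX.trans e).trans (diagEquiv K G Y).symm⟩

/-- A Banach space elementary equivalent to a finite-dimensional Banach
space `X` is isometrically isomorphic to `X`: the class of elementary equivalence of a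
finite-dimensional space has exactly one member up to isometry. -/
theorem elemEquiv_finiteDimensional_isometric
    (X Y : Type u) [NormedAddCommGroup X] [NormedSpace ℝ X] [FiniteDimensional ℝ X]
    [NormedAddCommGroup Y] [NormedSpace ℝ Y] [CompleteSpace Y]
    (h : ElemEquiv X Y) :
    Nonempty (X ≃ₗᵢ[ℝ] Y) :=
  elemEquiv_finiteDimensional_isometric_general X Y h

end
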